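/- The map κ restricted to the auxiliary feasible set Ξ' is a bijection from Ξ' onto the LAS-constrained set Ξ_N(a,c,b): κ maps Ξ' into Ξ_N(a,c,b), is injective on Ξ', and every w ∈ Ξ_N(a,c,b) equals κ(v,z) for exactly one (v,z) ∈ Ξ'. -/

import Mathlib

open Matrix

/-- Support indicator of an exact design. -/
def suppInd {n : ℕ} (w : Fin n → ℕ) : Fin n → ℕ := fun i => if 0 < w i then 1 else 0

/-- The LAS-constrained set of exact designs of size `N`. -/
def XiLAS (n K N : ℕ) (a c : Fin n → Fin K → ℝ) (b : Fin K → ℝ) : Set (Fin n → ℕ) :=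
  {w | (∀ k, (∑ i, a i k * (w i : ℝ)) + (∑ i, c i k * (suppInd w i : ℝ)) ≤ b k) ∧
       (∑ i, w i) = N}

/-- The auxiliary feasible set of auxiliary designs `(v, z)`. -/
def AuxFeas (n K N r : ℕ) (j₀ : Fin r) (a c : Fin n → Fin K → ℝ) (b : Fin K → ℝ) :
    Set ((Fin n × Fin r → ℕ) × (Fin n → ℕ)) :=
  {vz | (∀ i j, vz.1 (i, j) = vz.1 (i, j₀)) ∧
        (∀ i, vz.2 i ≤ 1) ∧
        (∀ i, vz.2 i ≤ vz.1 (i, j₀) ∧ vz.1 (i, j₀) ≤ N * vz.2 i) ∧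
        (∀ k, (∑ i, a i k * (vz.1 (i, j₀) : ℝ)) + (∑ i, c i k * (vz.2 i : ℝ)) ≤ b k) ∧
        (∑ i, vz.1 (i, j₀)) = N}

/-- The conversion map from auxiliary designs to exact designs. -/
def kappa {n r : ℕ} (j₀ : Fin r) (vz : (Fin n × Fin r → ℕ) × (Fin n → ℕ)) : Fin n → ℕ :=
  fun i => vz.1 (i, j₀)

/-! The linking constraints `z ≤ 1`, `z ≤ v(·, j₀) ≤ N z` force `z` to be the support indicator
of `κ(v, z)`, and condition (i) makes `v` constant in `j`, so `(v, z)` is recovered from `κ(v, z)`.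
Conversely every `w ∈ Ξ_N` lifts to `((i, j) ↦ w i, s_w)`, using `w ≤ N`. -/

section suppInd

variable {n : ℕ}

theorem suppInd_le_one (w : Fin n → ℕ) (i : Fin n) : suppInd w i ≤ 1 := by
  unfold suppInd; split <;> omega

theorem suppInd_le (w : Fin n → ℕ) (i : Fin n) : suppInd w i ≤ w i := by
  unfold suppInd; split <;> omega

theorem le_mul_suppInd {w : Fin n → ℕ} {M : ℕ} {i : Fin n} (hwi : w i ≤ M) :
    w i ≤ M * suppInd w i := by
  unfold suppInd; split <;> simp_all

theorem suppInd_eq_of_le {w z : Fin n → ℕ} {M : ℕ} (hz : ∀ i, z i ≤ 1)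
    (hzw : ∀ i, z i ≤ w i) (hwz : ∀ i, w i ≤ M * z i) : suppInd w = z := by
  funext i
  have := hz i; have := hzw i; have := hwz i
  unfold suppInd
  interval_cases z i <;> split <;> omega

end suppInd

section AuxFeas

variable {n K N r : ℕ} {j₀ : Fin r} {a c : Fin n → Fin K → ℝ} {b : Fin K → ℝ}

theorem suppInd_kappa_of_mem_AuxFeas {vz : (Fin n × Fin r → ℕ) × (Fin n → ℕ)}
    (h : vz ∈ AuxFeas n K N r j₀ a c b) : suppInd (kappa j₀ vz) = vz.2 :=
  suppInd_eq_of_le h.2.1 (fun i => (h.2.2.1 i).1) (fun i => (h.2.2.1 i).2)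

theorem kappa_mem_XiLAS {vz : (Fin n × Fin r → ℕ) × (Fin n → ℕ)}
    (h : vz ∈ AuxFeas n K N r j₀ a c b) : kappa j₀ vz ∈ XiLAS n K N a c b := by
  refine ⟨fun k => ?_, h.2.2.2.2⟩
  rw [suppInd_kappa_of_mem_AuxFeas h]
  exact h.2.2.2.1 k

theorem kappa_injOn_AuxFeas : Set.InjOn (kappa j₀) (AuxFeas n K N r j₀ a c b) := by
  intro vz₁ h₁ vz₂ h₂ hk
  refine Prod.ext (funext fun ⟨i, j⟩ => ?_) ?_
  · rw [h₁.1 i j, h₂.1 i j]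
    exact congrFun hk i
  · rw [← suppInd_kappa_of_mem_AuxFeas h₁, ← suppInd_kappa_of_mem_AuxFeas h₂, hk]

def auxOfDesign (r : ℕ) (w : Fin n → ℕ) : (Fin n × Fin r → ℕ) × (Fin n → ℕ) :=
  (fun p => w p.1, suppInd w)

theorem kappa_auxOfDesign (w : Fin n → ℕ) : kappa j₀ (auxOfDesign r w) = w := rfl

theorem auxOfDesign_mem_AuxFeas {w : Fin n → ℕ} (hw : w ∈ XiLAS n K N a c b) :
    auxOfDesign r w ∈ AuxFeas n K N r j₀ a c b := by
  have hwN : ∀ i, w i ≤ N := fun i =>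
    hw.2 ▸ Finset.single_le_sum (fun i _ => Nat.zero_le (w i)) (Finset.mem_univ i)
  exact ⟨fun _ _ => rfl, suppInd_le_one w,
    fun i => ⟨suppInd_le w i, le_mul_suppInd (hwN i)⟩, hw.1, hw.2⟩

end AuxFeas

theorem kappa_bijective_general (n K N r : ℕ) (j₀ : Fin r)
    (a c : Fin n → Fin K → ℝ) (b : Fin K → ℝ) :
    (∀ vz ∈ AuxFeas n K N r j₀ a c b, kappa j₀ vz ∈ XiLAS n K N a c b) ∧
    (∀ vz₁ ∈ AuxFeas n K N r j₀ a c b, ∀ vz₂ ∈ AuxFeas n K N r j₀ a c b,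
      kappa j₀ vz₁ = kappa j₀ vz₂ → vz₁ = vz₂) ∧
    (∀ w ∈ XiLAS n K N a c b,
      ∃! vz : (Fin n × Fin r → ℕ) × (Fin n → ℕ),
        vz ∈ AuxFeas n K N r j₀ a c b ∧ kappa j₀ vz = w) :=
  ⟨fun _ => kappa_mem_XiLAS, fun _ h₁ _ h₂ => kappa_injOn_AuxFeas h₁ h₂,
    fun w hw => ⟨auxOfDesign r w, ⟨auxOfDesign_mem_AuxFeas hw, kappa_auxOfDesign w⟩,
      fun _ ⟨h, hk⟩ => kappa_injOn_AuxFeas h (auxOfDesign_mem_AuxFeas hw) hk⟩⟩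

/-- `κ` restricted to the auxiliary feasible set is a bijection onto the
LAS-constrained set. -/
theorem kappa_bijective (n K N r : ℕ) (hr : 1 ≤ r) (j₀ : Fin r)
    (a c : Fin n → Fin K → ℝ) (b : Fin K → ℝ) :
    (∀ vz ∈ AuxFeas n K N r j₀ a c b, kappa j₀ vz ∈ XiLAS n K N a c b) ∧
    (∀ vz₁ ∈ AuxFeas n K N r j₀ a c b, ∀ vz₂ ∈ AuxFeas n K N r j₀ a c b,
      kappa j₀ vz₁ = kappa j₀ vz₂ → vz₁ = vz₂) ∧
    (∀ w ∈ XiLAS n K N a c b,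
      ∃! vz : (Fin n × Fin r → ℕ) × (Fin n → ℕ),
        vz ∈ AuxFeas n K N r j₀ a c b ∧ kappa j₀ vz = w) :=
  kappa_bijective_general n K N r j₀ a c b
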